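/- arXiv:0710.1276 — 5 statements merged into one kernel-verified Lean document; each statement's English description precedes it below -/
import Mathlib

section
/- The functions A(t) = A₀(3(A₀/(B₀C₀))t+1)^{-1/3}, B(t) = B₀(3(A₀/(B₀C₀))t+1)^{1/3}, C(t) = C₀(3(A₀/(B₀C₀))t+1)^{1/3} solve the ODE system dA/dt = -A²/(BC), dB/dt = A/C, dC/dt = A/B with initial values A₀, B₀, C₀ > 0, for all t ≥ 0. -/
/-! With `u = 3kt + 1` and `v = u^{1/3}`, each of `A, B, C` is a constant multiple of a power
of `v` and `u' = 3k`, so every derivative is a rational expression in `v`; substituting `u = v³`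
and `k = A₀/(B₀C₀)` makes the two sides of each equation the same monomial in `v`. -/

theorem hasDerivAt_const_mul_rpow_affine (c p a b t : ℝ) (h : a * t + b ≠ 0) :
    HasDerivAt (fun s => c * (a * s + b) ^ p) (c * (a * p * (a * t + b) ^ p / (a * t + b))) t := by
  have hlin : HasDerivAt (fun s => a * s + b) a t := by
    simpa using ((hasDerivAt_id t).const_mul a).add_const b
  simpa [Real.rpow_sub_one h, mul_div_assoc] using (hlin.rpow_const (Or.inl h)).const_mul c

/-- The explicit functions `A(t) = A₀(3kt+1)^{-1/3}`, `B(t) = B₀(3kt+1)^{1/3}`,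
`C(t) = C₀(3kt+1)^{1/3}` with `k = A₀/(B₀C₀)` solve the Nil Ricci flow ODE system
`A' = -A²/(BC)`, `B' = A/C`, `C' = A/B` with initial values `A₀, B₀, C₀ > 0`, for all
`t ≥ 0`. -/
theorem nil_ricci_flow_solution (A₀ B₀ C₀ : ℝ) (hA : 0 < A₀) (hB : 0 < B₀) (hC : 0 < C₀) :
    let k := A₀ / (B₀ * C₀)
    let A : ℝ → ℝ := fun t => A₀ * (3 * k * t + 1) ^ (-(1 / 3) : ℝ)
    let B : ℝ → ℝ := fun t => B₀ * (3 * k * t + 1) ^ ((1 / 3) : ℝ)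
    let C : ℝ → ℝ := fun t => C₀ * (3 * k * t + 1) ^ ((1 / 3) : ℝ)
    A 0 = A₀ ∧ B 0 = B₀ ∧ C 0 = C₀ ∧
    ∀ t : ℝ, 0 ≤ t →
      HasDerivAt A (-(A t) ^ 2 / (B t * C t)) t ∧
      HasDerivAt B (A t / C t) t ∧
      HasDerivAt C (A t / B t) t := by
  intro k A B C
  refine ⟨by simp [A], by simp [B], by simp [C], fun t ht => ?_⟩
  have hu : 0 < 3 * k * t + 1 := by positivity
  have hderiv := fun c p => hasDerivAt_const_mul_rpow_affine c p (3 * k) 1 t hu.ne'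
  have hneg := Real.rpow_neg hu.le (1 / 3)
  have hcube : ((3 * k * t + 1) ^ (1 / 3 : ℝ)) ^ 3 = 3 * k * t + 1 := by
    simpa using Real.rpow_inv_natCast_pow (n := 3) hu.le (by norm_num)
  have hv : 0 < (3 * k * t + 1) ^ (1 / 3 : ℝ) := by positivity
  refine ⟨?_, ?_, ?_⟩ <;> convert hderiv _ _ using 1 <;> simp only [A, B, C, hneg]
  all_goals
    generalize 3 * k * t + 1 = u at hcube hv ⊢
    generalize u ^ (1 / 3 : ℝ) = v at hcube hv ⊢
    subst hcube
    simp only [k]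
    field_simp
end

section
/- For the Nil Ricci flow solution A(t)=A₀(3kt+1)^{-1/3}, B(t)=B₀(3kt+1)^{1/3}, C(t)=C₀(3kt+1)^{1/3} with k = A₀/(B₀C₀), the quantity t·max(|A/(4BC)|, |3A/(4BC)|) stays bounded as t → ∞; i.e., each sectional curvature of the solution decays like 1/t (the solution is Type III). -/
/-!
Along the solution `A/(BC) = k/(3kt+1)`, because the exponents `-1/3, 1/3, 1/3` of `3kt+1`
sum to `-1`. Hence every sectional curvature is at most `3k/(4(3kt+1))` in absolute value,
and `t` times it is bounded by `1/4`.
-/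

open Real

lemma rpow_neg_third_div_rpow_third_sq {u : ℝ} (hu : 0 < u) :
    u ^ (-(1 / 3) : ℝ) / (u ^ (1 / 3 : ℝ) * u ^ (1 / 3 : ℝ)) = u⁻¹ := by
  rw [← rpow_add hu, ← rpow_sub hu]
  norm_num [rpow_neg_one]

lemma mul_rpow_neg_third_div_mul_rpow_third {u : ℝ} (hu : 0 < u) (a b c : ℝ) :
    a * u ^ (-(1 / 3) : ℝ) / (b * u ^ (1 / 3 : ℝ) * (c * u ^ (1 / 3 : ℝ))) = a / (b * c) / u := by
  rw [show b * u ^ (1 / 3 : ℝ) * (c * u ^ (1 / 3 : ℝ))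
      = b * c * (u ^ (1 / 3 : ℝ) * u ^ (1 / 3 : ℝ)) by ring,
    mul_div_mul_comm, rpow_neg_third_div_rpow_third_sq hu, div_eq_mul_inv (a / (b * c))]

lemma mul_div_three_mul_add_one_le {k t : ℝ} (hk : 0 ≤ k) (ht : 0 ≤ t) :
    t * (k / (3 * k * t + 1)) ≤ 1 / 3 := by
  rw [mul_div_assoc', div_le_iff₀ (by positivity)]
  linarith

lemma max_abs_abs_three_mul (x : ℝ) : max |x| |3 * x| = 3 * |x| := by
  rw [abs_mul, abs_of_pos (three_pos : (0 : ℝ) < 3)]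
  exact max_eq_right (by linarith [abs_nonneg x])

/-- For the Nil Ricci flow solution `A(t) = A₀(3kt+1)^{-1/3}`, `B(t) = B₀(3kt+1)^{1/3}`,
`C(t) = C₀(3kt+1)^{1/3}` with `k = A₀/(B₀C₀)`, the quantity
`t · max(|A/(4BC)|, |3A/(4BC)|)` stays bounded for `t ≥ 0`: the sectional curvatures
decay like `1/t`, i.e. the solution is Type III. -/
theorem nil_ricci_flow_typeIII (A₀ B₀ C₀ : ℝ) (hA : 0 < A₀) (hB : 0 < B₀) (hC : 0 < C₀) :
    let k := A₀ / (B₀ * C₀)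
    let A : ℝ → ℝ := fun t => A₀ * (3 * k * t + 1) ^ (-(1 / 3) : ℝ)
    let B : ℝ → ℝ := fun t => B₀ * (3 * k * t + 1) ^ ((1 / 3) : ℝ)
    let C : ℝ → ℝ := fun t => C₀ * (3 * k * t + 1) ^ ((1 / 3) : ℝ)
    ∃ M : ℝ, ∀ t : ℝ, 0 ≤ t →
      t * max |A t / (4 * B t * C t)| |3 * A t / (4 * B t * C t)| ≤ M := by
  intro k A B C
  have hk : 0 < k := by positivity
  refine ⟨1 / 4, fun t ht => ?_⟩
  have hu : 0 < 3 * k * t + 1 := by positivity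
  have curvature : A t / (4 * B t * C t) = k / (3 * k * t + 1) / 4 := by
    rw [mul_assoc, div_mul_eq_div_div_swap, mul_rpow_neg_third_div_mul_rpow_third hu]
  rw [mul_div_assoc (3 : ℝ), max_abs_abs_three_mul, curvature, abs_of_pos (by positivity)]
  linarith [mul_div_three_mul_add_one_le hk.le ht]
end

section
/- The metric g₁ = (dz - x dy)² + dy² + dx² on ℝ³ generates the self-similar Ricci flow solution g(t) = t^{-1/3}(dz - x dy)² + t^{1/3} dy² + t^{1/3} dx², and this solution satisfies g(t) = t φ_t^* g₁ where φ_t(x,y,z) = (t^{-1/3} x, t^{-1/3} y, t^{-2/3} z). -/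
open Matrix

/-- The metric `a (dz - x dy)² + b (dy² + dx²)` on ℝ³ in the coordinate basis
`(dx, dy, dz)`, as a matrix-valued function of the point `p = (x,y,z)`. -/
noncomputable def nilMetricMat (a b : ℝ) (p : ℝ × ℝ × ℝ) : Matrix (Fin 3) (Fin 3) ℝ :=
  !![b, 0, 0;
     0, b + a * p.1 ^ 2, -(a * p.1);
     0, -(a * p.1), a]

/-- The time-`t` metric `g(t) = t^{-1/3}(dz - x dy)² + t^{1/3}(dy² + dx²)`. -/
noncomputable def nilSolitonFlow (t : ℝ) : ℝ × ℝ × ℝ → Matrix (Fin 3) (Fin 3) ℝ :=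
  nilMetricMat (t ^ (-(1 / 3) : ℝ)) (t ^ ((1 / 3) : ℝ))

/-!
The dilation `δ_λ(x, y, z) = (λx, λy, λ²z)` of Nil pulls `dx, dy` back to `λ dx, λ dy` and the
contact form `dz - x dy` back to `λ² (dz - x dy)`, so `δ_λ^* g_{a,b} = g_{λ⁴a, λ²b}` for the metric
`g_{a,b} = a (dz - x dy)² + b (dx² + dy²)`. The map `φ_t` is `δ_λ` with `λ = t^{-1/3}`, and
`t λ⁴ = t^{-1/3}`, `t λ² = t^{1/3}`.
-/

theorem smul_nilMetricMat (c a b : ℝ) (p : ℝ × ℝ × ℝ) :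
    c • nilMetricMat a b p = nilMetricMat (c * a) (c * b) p := by
  simp only [nilMetricMat, smul_of, smul_cons, smul_empty, smul_eq_mul]
  ring_nf

theorem nilMetricMat_pullback_dilation (l a b : ℝ) (p : ℝ × ℝ × ℝ) :
    (diagonal ![l, l, l ^ 2])ᵀ * nilMetricMat a b (l * p.1, l * p.2.1, l ^ 2 * p.2.2) *
        diagonal ![l, l, l ^ 2] =
      nilMetricMat (l ^ 4 * a) (l ^ 2 * b) p := by
  ext i j
  fin_cases i <;> fin_cases j <;> simp [nilMetricMat] <;> ring

theorem Real.self_mul_rpow_pow {t : ℝ} (ht : 0 < t) (x : ℝ) (n : ℕ) :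
    t * (t ^ x) ^ n = t ^ (x * n + 1) := by
  rw [← Real.rpow_mul_natCast ht.le, mul_comm, Real.rpow_add_one ht.ne']

/-- The Nil soliton: `g₁ = (dz - x dy)² + dy² + dx²` generates the self-similar Ricci flow
solution `g(t) = t^{-1/3}(dz - x dy)² + t^{1/3}(dy² + dx²)`, i.e. `g(t) = t φ_t^* g₁` where
`φ_t(x,y,z) = (t^{-1/3}x, t^{-1/3}y, t^{-2/3}z)`. The pullback is computed as
`Jᵀ g₁(φ_t p) J` with `J` the (diagonal) Jacobian of `φ_t`. -/
theorem nil_ricci_soliton :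
    ∀ t : ℝ, 0 < t → ∀ p : ℝ × ℝ × ℝ,
      let φ : ℝ × ℝ × ℝ → ℝ × ℝ × ℝ :=
        fun q => (t ^ (-(1 / 3) : ℝ) * q.1, t ^ (-(1 / 3) : ℝ) * q.2.1,
          t ^ (-(2 / 3) : ℝ) * q.2.2)
      let J : Matrix (Fin 3) (Fin 3) ℝ :=
        Matrix.diagonal ![t ^ (-(1 / 3) : ℝ), t ^ (-(1 / 3) : ℝ), t ^ (-(2 / 3) : ℝ)]
      t • (Jᵀ * nilMetricMat 1 1 (φ p) * J) = nilSolitonFlow t p := by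
  intro t ht p φ J
  have h_sq : t ^ (-(2 / 3) : ℝ) = (t ^ (-(1 / 3) : ℝ)) ^ 2 := by
    rw [← Real.rpow_mul_natCast ht.le]
    norm_num
  simp only [φ, J, h_sq]
  rw [nilMetricMat_pullback_dilation, smul_nilMetricMat, mul_one, mul_one,
    Real.self_mul_rpow_pow ht, Real.self_mul_rpow_pow ht, nilSolitonFlow]
  norm_num
end

section
/- The functions A(t) = A₀(1+7R₀²t)^{-1/14}, B(t) = B₀(1+7R₀²t)^{3/14}, C(t) = C₀(1+7R₀²t)^{3/14} with R₀ = -A₀/(2B₀C₀) satisfy: A(t)B(t)C(t) = A₀B₀C₀(1+7R₀²t)^{5/14}, and each sectional curvature K = ±cA/(BC) (c ∈ {1,3}) satisfies K(t)·t^{1/2} bounded as t→∞ with nonzero limit, so the solution is Type III for the cross curvature flow (p = -1). -/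
/-!
All three metric coefficients are powers of `u(t) = 1 + 7R₀²t`, so the curvature
`A/(4BC)` is `A₀/(4B₀C₀) · u(t)^{-1/2}`, and `t^{1/2} u(t)^{-1/2} = (t/u(t))^{1/2}` increases
to `(7R₀²)^{-1/2}`. This gives both the nonzero limit and the uniform bound.
-/

open Filter Real Topology

section PowerProducts

variable {u : ℝ} (hu : 0 < u) (a b c α β γ : ℝ)
include hu

theorem mul_rpow_mul_mul_rpow_mul_mul_rpow :
    a * u ^ α * (b * u ^ β) * (c * u ^ γ) = a * b * c * u ^ (α + β + γ) := by
  rw [rpow_add hu, rpow_add hu]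
  ring

theorem mul_rpow_div_mul_rpow_mul_mul_rpow :
    a * u ^ α / (4 * (b * u ^ β) * (c * u ^ γ)) = a / (4 * b * c) * u ^ (α - β - γ) := by
  rw [rpow_sub hu, rpow_sub hu]
  ring

end PowerProducts

section RescaledDecay

variable {k : ℝ}

theorem rpow_mul_one_add_mul_rpow_neg {t : ℝ} (hk : 0 ≤ k) (ht : 0 ≤ t) (p : ℝ) :
    t ^ p * (1 + k * t) ^ (-p) = (t / (1 + k * t)) ^ p := by
  have hu : 0 < 1 + k * t := by positivity
  rw [div_rpow ht hu.le, rpow_neg hu.le, div_eq_mul_inv]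

theorem tendsto_div_one_add_mul_atTop (hk : 0 < k) :
    Tendsto (fun t : ℝ => t / (1 + k * t)) atTop (𝓝 k⁻¹) := by
  have h : Tendsto (fun t : ℝ => (t⁻¹ + k)⁻¹) atTop (𝓝 k⁻¹) := by
    simpa using (tendsto_inv_atTop_zero.add_const k).inv₀ (by simpa using hk.ne')
  refine h.congr' ?_
  filter_upwards [eventually_gt_atTop 0] with t ht
  field_simp

theorem tendsto_rpow_mul_one_add_mul_rpow_neg (hk : 0 < k) (p : ℝ) :
    Tendsto (fun t : ℝ => t ^ p * (1 + k * t) ^ (-p)) atTop (𝓝 (k⁻¹ ^ p)) := by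
  have h := ((continuousAt_rpow_const _ p (Or.inl (inv_ne_zero hk.ne'))).tendsto).comp
    (tendsto_div_one_add_mul_atTop hk)
  refine h.congr' ?_
  filter_upwards [eventually_ge_atTop 0] with t ht
  exact (rpow_mul_one_add_mul_rpow_neg hk.le ht p).symm

theorem rpow_mul_one_add_mul_rpow_neg_le (hk : 0 < k) {p t : ℝ} (hp : 0 ≤ p) (ht : 0 ≤ t) :
    t ^ p * (1 + k * t) ^ (-p) ≤ k⁻¹ ^ p := by
  rw [rpow_mul_one_add_mul_rpow_neg hk.le ht]
  refine rpow_le_rpow (by positivity) ?_ hp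
  rw [div_le_iff₀ (by positivity)]
  field_simp
  linarith

end RescaledDecay

/-- For the negative cross curvature flow solution on Nil,
`A(t) = A₀(1+7R₀²t)^{-1/14}`, `B(t) = B₀(1+7R₀²t)^{3/14}`, `C(t) = C₀(1+7R₀²t)^{3/14}`
with `R₀ = -A₀/(2B₀C₀)`: the product satisfies
`A B C = A₀B₀C₀(1+7R₀²t)^{5/14}`, and the sectional curvatures `±A/(4BC)`, `±3A/(4BC)`
satisfy `t^{1/2} K(t)` bounded with a nonzero limit as `t → ∞`; in particular the
solution is Type III for the cross curvature flow (`p = -1`). -/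
theorem nil_xcf_typeIII (A₀ B₀ C₀ : ℝ) (hA : 0 < A₀) (hB : 0 < B₀) (hC : 0 < C₀) :
    let R₀ := -A₀ / (2 * B₀ * C₀)
    let A : ℝ → ℝ := fun t => A₀ * (1 + 7 * R₀ ^ 2 * t) ^ (-(1 / 14) : ℝ)
    let B : ℝ → ℝ := fun t => B₀ * (1 + 7 * R₀ ^ 2 * t) ^ ((3 / 14) : ℝ)
    let C : ℝ → ℝ := fun t => C₀ * (1 + 7 * R₀ ^ 2 * t) ^ ((3 / 14) : ℝ)
    (∀ t : ℝ, 0 ≤ t →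
      A t * B t * C t = A₀ * B₀ * C₀ * (1 + 7 * R₀ ^ 2 * t) ^ ((5 / 14) : ℝ)) ∧
    (∃ L : ℝ, L ≠ 0 ∧
      Tendsto (fun t : ℝ => t ^ ((1 / 2) : ℝ) * (A t / (4 * B t * C t))) atTop (nhds L) ∧
      Tendsto (fun t : ℝ => t ^ ((1 / 2) : ℝ) * (3 * A t / (4 * B t * C t))) atTop
        (nhds (3 * L))) ∧
    (∃ M : ℝ, ∀ t : ℝ, 0 ≤ t →
      t ^ ((1 / 2) : ℝ) *
        max |A t / (4 * B t * C t)| |3 * A t / (4 * B t * C t)| ≤ M) := by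
  intro R₀ A B C
  set k := 7 * R₀ ^ 2
  set c := A₀ / (4 * B₀ * C₀)
  have hR : R₀ < 0 := div_neg_of_neg_of_pos (neg_neg_of_pos hA) (by positivity)
  have hk : 0 < k := mul_pos (by norm_num) (pow_two_pos_of_ne_zero hR.ne)
  have hu {t : ℝ} (ht : 0 ≤ t) : 0 < 1 + k * t := by positivity
  have hcurv {t : ℝ} (ht : 0 ≤ t) :
      t ^ ((1 / 2) : ℝ) * (A t / (4 * B t * C t))
        = c * (t ^ ((1 / 2) : ℝ) * (1 + k * t) ^ (-(1 / 2) : ℝ)) := by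
    rw [mul_rpow_div_mul_rpow_mul_mul_rpow (hu ht)]
    norm_num
    ring
  have hlim : Tendsto (fun t : ℝ => t ^ ((1 / 2) : ℝ) * (A t / (4 * B t * C t))) atTop
      (𝓝 (c * k⁻¹ ^ ((1 / 2) : ℝ))) := by
    refine ((tendsto_rpow_mul_one_add_mul_rpow_neg hk _).const_mul c).congr' ?_
    filter_upwards [eventually_ge_atTop 0] with t ht
    exact (hcurv ht).symm
  refine ⟨fun t ht => ?_, ⟨c * k⁻¹ ^ ((1 / 2) : ℝ), by positivity, hlim, ?_⟩,
    ⟨3 * (c * k⁻¹ ^ ((1 / 2) : ℝ)), fun t ht => ?_⟩⟩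
  · rw [mul_rpow_mul_mul_rpow_mul_mul_rpow (hu ht)]
    norm_num
  · simpa only [mul_div_assoc, mul_left_comm] using hlim.const_mul 3
  · have hK : 0 ≤ A t / (4 * B t * C t) := by positivity
    rw [mul_div_assoc 3, abs_of_nonneg hK, abs_of_nonneg (by positivity),
      max_eq_right (by linarith), mul_left_comm, hcurv ht]
    gcongr
    exact rpow_mul_one_add_mul_rpow_neg_le hk (by norm_num) ht
end

section
/- The family g(t) = (E₁/√t)(e^{2z}dx² + e^{-2z}dy²) + 2√t dz² on ℝ³ (t > 0, E₁ > 0) satisfies g(t) = t^{1/2} ψ_t^* g(1), where ψ_t(x,y,z) = (t^{-1/2}x, t^{-1/2}y, z); hence g(1) is a cross-curvature soliton metric on Sol with scaling exponent 1/2. -/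
/-! Both `g(t)` and the Jacobian of `ψ_t` are diagonal, and `g` depends only on `z`, which `ψ_t`
fixes; so the identity reduces entrywise to `t^{1/2} (t^{-1/2})² = t^{-1/2}`. -/

open Matrix

/-- The metric `(E₁/√t)(e^{2z}dx² + e^{-2z}dy²) + 2√t dz²` on ℝ³ at `p = (x,y,z)`. -/
noncomputable def solXCFMat (E₁ t : ℝ) (p : ℝ × ℝ × ℝ) : Matrix (Fin 3) (Fin 3) ℝ :=
  !![E₁ * t ^ (-(1 / 2) : ℝ) * Real.exp (2 * p.2.2), 0, 0;
     0, E₁ * t ^ (-(1 / 2) : ℝ) * Real.exp (-(2 * p.2.2)), 0;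
     0, 0, 2 * t ^ ((1 / 2) : ℝ)]

theorem solXCFMat_eq_diagonal (E₁ t : ℝ) (p : ℝ × ℝ × ℝ) :
    solXCFMat E₁ t p = diagonal ![E₁ * t ^ (-(1 / 2) : ℝ) * Real.exp (2 * p.2.2),
      E₁ * t ^ (-(1 / 2) : ℝ) * Real.exp (-(2 * p.2.2)), 2 * t ^ ((1 / 2) : ℝ)] := by
  ext i j
  fin_cases i <;> fin_cases j <;> rfl

theorem Matrix.diagonal_transpose_mul_diagonal_mul_diagonal {n α : Type*} [Fintype n]
    [DecidableEq n] [CommSemiring α] (d g : n → α) :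
    (diagonal d)ᵀ * diagonal g * diagonal d = diagonal fun i => d i ^ 2 * g i := by
  rw [diagonal_transpose, diagonal_mul_diagonal, diagonal_mul_diagonal]
  congr 1
  ext i
  ring

theorem sol_xcf_soliton_general (E₁ : ℝ) :
    ∀ t : ℝ, 0 < t → ∀ p : ℝ × ℝ × ℝ,
      let ψ : ℝ × ℝ × ℝ → ℝ × ℝ × ℝ :=
        fun q => (t ^ (-(1 / 2) : ℝ) * q.1, t ^ (-(1 / 2) : ℝ) * q.2.1, q.2.2)
      let J : Matrix (Fin 3) (Fin 3) ℝ :=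
        Matrix.diagonal ![t ^ (-(1 / 2) : ℝ), t ^ (-(1 / 2) : ℝ), 1]
      t ^ ((1 / 2) : ℝ) • (Jᵀ * solXCFMat E₁ 1 (ψ p) * J) = solXCFMat E₁ t p := by
  intro t ht p ψ J
  have hsqrt : t ^ ((1 / 2) : ℝ) ≠ 0 := (Real.rpow_pos_of_pos ht _).ne'
  rw [solXCFMat_eq_diagonal, solXCFMat_eq_diagonal,
    diagonal_transpose_mul_diagonal_mul_diagonal, ← diagonal_smul, Real.rpow_neg ht.le]
  congr 1
  ext i
  fin_cases i <;>
    simp only [ψ, Real.one_rpow, Pi.smul_apply, smul_eq_mul, Fin.isValue, Fin.zero_eta, Fin.mk_one,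
      Fin.reduceFinMk, cons_val_zero, cons_val_one, cons_val] <;>
    field_simp

/-- The Sol cross curvature soliton: the family
`g(t) = (E₁/√t)(e^{2z}dx² + e^{-2z}dy²) + 2√t dz²` (`t > 0`, `E₁ > 0`) satisfies
`g(t) = t^{1/2} ψ_t^* g(1)` where `ψ_t(x,y,z) = (t^{-1/2}x, t^{-1/2}y, z)`; hence `g(1)`
is a cross-curvature soliton on Sol with scaling exponent `1/2`. The pullback is
computed as `Jᵀ g(1)(ψ_t p) J` with `J` the Jacobian of `ψ_t`. -/
theorem sol_xcf_soliton (E₁ : ℝ) (hE₁ : 0 < E₁) :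
    ∀ t : ℝ, 0 < t → ∀ p : ℝ × ℝ × ℝ,
      let ψ : ℝ × ℝ × ℝ → ℝ × ℝ × ℝ :=
        fun q => (t ^ (-(1 / 2) : ℝ) * q.1, t ^ (-(1 / 2) : ℝ) * q.2.1, q.2.2)
      let J : Matrix (Fin 3) (Fin 3) ℝ :=
        Matrix.diagonal ![t ^ (-(1 / 2) : ℝ), t ^ (-(1 / 2) : ℝ), 1]
      t ^ ((1 / 2) : ℝ) • (Jᵀ * solXCFMat E₁ 1 (ψ p) * J) = solXCFMat E₁ t p :=
  sol_xcf_soliton_general E₁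
end
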